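/- Let 0 < r ≤ M/2 and k = ⌊M/2⌋. The map sending a partition π ∈ A_n(M,r) to the (k−1)-color partition (α(π), c) with α_i = π_i + π'_i − 2i + 1 and color c(i) = (r_i + r − 1)/2 if α_i ≡ r (mod 2) and c(i) = (r_i + r)/2 otherwise, is a bijection from A_n(M,r) onto C_n(M,r). Consequently |A_n(M,r)| = |C_n(M,r)|. -/

import Mathlib

/-- The conjugate partition: `conj π i = #{j ≥ 1 : π j ≥ i}`. -/
noncomputable def conj (π : ℕ → ℕ) (i : ℕ) : ℕ := {j : ℕ | 1 ≤ j ∧ i ≤ π j}.ncard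

/-- A partition, as a function from part indices (starting at 1) to part sizes:
nonincreasing on indices ≥ 1, eventually zero, with the unused index 0 set to 0. -/
def IsPartition (π : ℕ → ℕ) : Prop :=
  π 0 = 0 ∧ (∀ i j, 1 ≤ i → i ≤ j → π j ≤ π i) ∧ ∃ N, ∀ j, N ≤ j → π j = 0

/-- The number partitioned, i.e. the sum of all parts. -/
noncomputable def size (π : ℕ → ℕ) : ℕ := ∑' j, π j

/-- The Durfee square size: the largest `d` with `π d ≥ d`. -/
noncomputable def durfee (π : ℕ → ℕ) : ℕ := sSup {d : ℕ | d ≤ π d}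

/-- The number of parts. -/
noncomputable def len (π : ℕ → ℕ) : ℕ := conj π 1

/-- The `i`-th successive rank `r_i = π_i - π'_i`. -/
noncomputable def rank (π : ℕ → ℕ) (i : ℕ) : ℤ := (π i : ℤ) - (conj π i : ℤ)

/-- The `i`-th angle (hook) length `α_i = π_i + π'_i - 2 i + 1`, as an integer. -/
noncomputable def ang (π : ℕ → ℕ) (i : ℕ) : ℤ := (π i : ℤ) + (conj π i : ℤ) - 2 * i + 1

/-- The partition `α(π)` of angle lengths: `α_i = π_i + π'_i - 2 i + 1` for `1 ≤ i ≤ d(π)`,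
and `0` outside that range. -/
noncomputable def angPart (π : ℕ → ℕ) (i : ℕ) : ℕ :=
  if 1 ≤ i ∧ i ≤ durfee π then π i + conj π i + 1 - 2 * i else 0

/-- The color assigned to the `i`-th angle: `(r_i + r - 1)/2` if `α_i ≡ r (mod 2)`,
`(r_i + r)/2` otherwise (and `0` outside the range `1 ≤ i ≤ d(π)`). -/
noncomputable def colorOf (r : ℕ) (π : ℕ → ℕ) (i : ℕ) : ℕ :=
  if 1 ≤ i ∧ i ≤ durfee π then
    (if angPart π i % 2 = r % 2 then ((rank π i + r - 1) / 2).toNat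
     else ((rank π i + r) / 2).toNat)
  else 0

/-- `A_n(M,r)`: partitions of `n` with all successive ranks in `[-r+2, M-r-2]`. -/
def Aset (n M r : ℕ) : Set (ℕ → ℕ) :=
  {π | IsPartition π ∧ size π = n ∧
    ∀ i, 1 ≤ i → i ≤ durfee π → -(r : ℤ) + 2 ≤ rank π i ∧ rank π i ≤ (M : ℤ) - r - 2}

/-- A `t`-color partition: a partition together with a color function into `{1,…,t}`,
weakly increasing on equal parts, normalized to `0` outside the index range. -/
def IsColoredPartition (t : ℕ) (p : (ℕ → ℕ) × (ℕ → ℕ)) : Prop :=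
  IsPartition p.1 ∧
  (∀ i, 1 ≤ i → i ≤ len p.1 → 1 ≤ p.2 i ∧ p.2 i ≤ t) ∧
  (∀ i, 1 ≤ i → i + 1 ≤ len p.1 → p.1 i = p.1 (i + 1) → p.2 i ≤ p.2 (i + 1)) ∧
  (∀ i, i = 0 ∨ len p.1 < i → p.2 i = 0)

/-- Conditions (i)–(iii) of the Main Theorem defining `C_n(M,r)` (with `k = ⌊M/2⌋`). -/
def CCond (M r : ℕ) (α c : ℕ → ℕ) : Prop :=
  (∀ i, 1 ≤ i → i ≤ len α →
    if α i % 2 = r % 2 then (α i : ℤ) > |2 * (c i : ℤ) - r + 1|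
    else (α i : ℤ) > |2 * (c i : ℤ) - r|) ∧
  (∀ i, 1 ≤ i → i + 1 ≤ len α →
    (α i : ℤ) - (α (i + 1) : ℤ) ≥ 2 +
      (if α i % 2 = α (i + 1) % 2 then |2 * ((c i : ℤ) - (c (i + 1) : ℤ))|
       else if α (i + 1) % 2 = r % 2 then |2 * ((c i : ℤ) - (c (i + 1) : ℤ)) - 1|
       else |2 * ((c i : ℤ) - (c (i + 1) : ℤ)) + 1|)) ∧
  (∀ i, 1 ≤ i → i ≤ len α → M % 2 = 0 → c i = M / 2 - 1 → α i % 2 ≠ r % 2)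

/-- `C_n(M,r)`: the `(k-1)`-color partitions of `n` satisfying conditions (i)–(iii). -/
def Cset (n M r : ℕ) : Set ((ℕ → ℕ) × (ℕ → ℕ)) :=
  {p | IsColoredPartition (M / 2 - 1) p ∧ size p.1 = n ∧ CCond M r p.1 p.2}

/-!
A partition with Durfee square of side `d` is determined by its Frobenius coordinates
`a_i = π_i - i` and `b_i = π'_i - i` (`1 ≤ i ≤ d`), two strictly decreasing sequences of natural
numbers, and in these coordinates `α_i = a_i + b_i + 1` and `r_i = a_i - b_i`. Conversely, a pair
`(α_i, r_i)` with `|r_i| < α_i` and `α_i + r_i` odd comes from a unique pair `a_i, b_i ≥ 0`. The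
color is a halving of `r_i + r` or `r_i + r - 1` that is undone once the parity of `α_i` is known.
Rewritten in terms of `r_i`, condition (i) of `C_n(M,r)` says `a_i, b_i ≥ 0`, condition (ii) says
that both Frobenius sequences decrease strictly, and the color range together with (iii) is exactly
the rank bound defining `A_n(M,r)`.
-/

section Partition

variable {π : ℕ → ℕ}

lemma conj_eq_of_forall_iff {i n : ℕ} (h : ∀ j, 1 ≤ j → (i ≤ π j ↔ j ≤ n)) : conj π i = n := by
  have hset : {j : ℕ | 1 ≤ j ∧ i ≤ π j} = Set.Icc 1 n := by
    ext j
    exact ⟨fun ⟨hj, hij⟩ => ⟨hj, (h j hj).1 hij⟩, fun ⟨hj, hjn⟩ => ⟨hj, (h j hj).2 hjn⟩⟩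
  rw [conj, hset, Set.ncard_Icc_nat]
  omega

namespace IsPartition

lemma le_conj_iff (hπ : IsPartition π) {i m : ℕ} (hi : 1 ≤ i) (hm : 1 ≤ m) :
    m ≤ conj π i ↔ i ≤ π m := by
  obtain ⟨-, hanti, N, hN⟩ := hπ
  have hex : ∃ j, 1 ≤ j ∧ π j < i := ⟨N + 1, by omega, by rw [hN _ (by omega)]; omega⟩
  have key : ∀ j, 1 ≤ j → (i ≤ π j ↔ j ≤ Nat.find hex - 1) := fun j hj => by
    obtain ⟨hfind1, hfind⟩ := Nat.find_spec hex
    constructor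
    · intro hij
      by_contra! hlt
      have := hanti (Nat.find hex) j hfind1 (by omega)
      omega
    · intro hjn
      by_contra! hlt
      exact Nat.find_min hex (by omega) ⟨hj, hlt⟩
  rw [conj_eq_of_forall_iff key]
  exact (key m hm).symm

lemma conj_succ_le (hπ : IsPartition π) {i : ℕ} (hi : 1 ≤ i) : conj π (i + 1) ≤ conj π i := by
  rcases Nat.eq_zero_or_pos (conj π (i + 1)) with h0 | hpos
  · omega
  · have := (hπ.le_conj_iff (by omega) hpos).1 le_rfl
    exact (hπ.le_conj_iff hi hpos).2 (by omega)

lemma apply_eq_zero (hπ : IsPartition π) {i : ℕ} (h : ¬(1 ≤ i ∧ i ≤ len π)) : π i = 0 := by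
  rcases Nat.eq_zero_or_pos i with rfl | hi
  · exact hπ.1
  · have := (hπ.le_conj_iff le_rfl hi).not.1 (by unfold len at h; omega)
    omega

lemma size_eq_sum (hπ : IsPartition π) : size π = ∑ j ∈ Finset.Icc 1 (len π), π j :=
  tsum_eq_sum fun j hj => hπ.apply_eq_zero (by simpa using hj)

lemma bddAbove_durfee (hπ : IsPartition π) : BddAbove {d : ℕ | d ≤ π d} := by
  obtain ⟨-, -, N, hN⟩ := hπ
  refine ⟨N, fun d (hd : d ≤ π d) => ?_⟩
  by_contra! hlt
  have := hN d hlt.le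
  omega

lemma durfee_le (hπ : IsPartition π) : durfee π ≤ π (durfee π) :=
  Nat.sSup_mem (s := {d | d ≤ π d}) ⟨0, Nat.zero_le _⟩ hπ.bddAbove_durfee

lemma le_durfee (hπ : IsPartition π) {i : ℕ} (h : i ≤ π i) : i ≤ durfee π :=
  le_csSup hπ.bddAbove_durfee h

lemma durfee_le_apply (hπ : IsPartition π) {i : ℕ} (h1 : 1 ≤ i) (h2 : i ≤ durfee π) :
    durfee π ≤ π i :=
  hπ.durfee_le.trans (hπ.2.1 i _ h1 h2)

lemma durfee_le_conj (hπ : IsPartition π) {i : ℕ} (h1 : 1 ≤ i) (h2 : i ≤ durfee π) :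
    durfee π ≤ conj π i := by
  by_cases hd : durfee π = 0
  · omega
  · exact (hπ.le_conj_iff h1 (by omega)).2 (h2.trans hπ.durfee_le)

lemma apply_le_durfee (hπ : IsPartition π) {i : ℕ} (h : durfee π < i) : π i ≤ durfee π := by
  have hsucc : π (durfee π + 1) < durfee π + 1 := by
    by_contra! hge
    have := hπ.le_durfee hge
    omega
  have := hπ.2.1 (durfee π + 1) i (by omega) h
  omega

end IsPartition

end Partition

section Frobenius

def IsFrobenius (l : ℕ) (a b : ℕ → ℕ) : Prop :=
  ∀ i, 1 ≤ i → i + 1 ≤ l → a (i + 1) < a i ∧ b (i + 1) < b i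

/-- The partition with Frobenius symbol `(a_1, …, a_l | b_1, …, b_l)`; below the Durfee square,
part `i` counts the columns `t ≤ l` of length `b_t + t ≥ i`. -/
def ofFrobenius (l : ℕ) (a b : ℕ → ℕ) (i : ℕ) : ℕ :=
  if i = 0 then 0
  else if i ≤ l then a i + i
  else ((Finset.Icc 1 l).filter (fun t => i ≤ b t + t)).card

variable {l : ℕ} {a b : ℕ → ℕ}

lemma IsFrobenius.add_le_add_of_le (h : IsFrobenius l a b) {i j : ℕ} (hi : 1 ≤ i) (hij : i ≤ j)
    (hj : j ≤ l) : a j + j ≤ a i + i ∧ b j + j ≤ b i + i := by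
  induction j, hij using Nat.le_induction with
  | base => exact ⟨le_rfl, le_rfl⟩
  | succ j hij ih =>
    have := h j (by omega) hj
    have := ih (by omega)
    omega

lemma ofFrobenius_of_le {i : ℕ} (h1 : 1 ≤ i) (h2 : i ≤ l) : ofFrobenius l a b i = a i + i := by
  rw [ofFrobenius, if_neg (by omega), if_pos h2]

lemma ofFrobenius_of_lt {i : ℕ} (h : l < i) :
    ofFrobenius l a b i = ((Finset.Icc 1 l).filter (fun t => i ≤ b t + t)).card := by
  rw [ofFrobenius, if_neg (by omega), if_neg (by omega)]

lemma ofFrobenius_le_of_lt {i : ℕ} (h : l < i) : ofFrobenius l a b i ≤ l := by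
  rw [ofFrobenius_of_lt h]
  exact (Finset.card_filter_le _ _).trans (by simp)

lemma ofFrobenius_congr {a' b' : ℕ → ℕ} (ha : ∀ i, 1 ≤ i → i ≤ l → a i = a' i)
    (hb : ∀ i, 1 ≤ i → i ≤ l → b i = b' i) : ofFrobenius l a b = ofFrobenius l a' b' := by
  funext i
  rcases Nat.eq_zero_or_pos i with rfl | h1
  · rfl
  by_cases h2 : i ≤ l
  · rw [ofFrobenius_of_le h1 h2, ofFrobenius_of_le h1 h2, ha i h1 h2]
  · rw [ofFrobenius_of_lt (by omega), ofFrobenius_of_lt (by omega)]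
    congr 1
    refine Finset.filter_congr fun t ht => ?_
    rw [Finset.mem_Icc] at ht
    rw [hb t ht.1 ht.2]

lemma IsFrobenius.ofFrobenius_eq_zero (h : IsFrobenius l a b) {i : ℕ} (hl : l < i)
    (hb : b 1 + 1 < i) : ofFrobenius l a b i = 0 := by
  rw [ofFrobenius_of_lt hl, Finset.card_eq_zero, Finset.filter_eq_empty_iff]
  intro t ht
  rw [Finset.mem_Icc] at ht
  have := (h.add_le_add_of_le le_rfl ht.1 ht.2).2
  omega

lemma IsFrobenius.isPartition_ofFrobenius (h : IsFrobenius l a b) :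
    IsPartition (ofFrobenius l a b) := by
  refine ⟨rfl, fun i j h1 hij => ?_, l + b 1 + 2,
    fun j hj => h.ofFrobenius_eq_zero (by omega) (by omega)⟩
  by_cases hjl : j ≤ l
  · rw [ofFrobenius_of_le h1 (hij.trans hjl), ofFrobenius_of_le (by omega) hjl]
    exact (h.add_le_add_of_le h1 hij hjl).1
  rw [ofFrobenius_of_lt (by omega)]
  by_cases hil : i ≤ l
  · rw [ofFrobenius_of_le h1 hil]
    have := (h.add_le_add_of_le h1 hil le_rfl).1
    exact (Finset.card_filter_le _ _).trans (by rw [Nat.card_Icc]; omega)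
  · rw [ofFrobenius_of_lt (by omega)]
    exact Finset.card_le_card
      (Finset.monotone_filter_right _ fun t _ (ht : j ≤ b t + t) => by omega)

lemma durfee_ofFrobenius : durfee (ofFrobenius l a b) = l := by
  refine IsGreatest.csSup_eq ⟨?_, fun d (hd : d ≤ ofFrobenius l a b d) => ?_⟩
  · rcases Nat.eq_zero_or_pos l with rfl | h1
    · exact Nat.zero_le _
    · show l ≤ ofFrobenius l a b l
      rw [ofFrobenius_of_le h1 le_rfl]
      omega
  · by_contra! hlt
    have := ofFrobenius_le_of_lt (a := a) (b := b) hlt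
    omega

lemma IsFrobenius.le_card_filter_iff (h : IsFrobenius l a b) {i j : ℕ} (h1 : 1 ≤ i) (h2 : i ≤ l) :
    i ≤ ((Finset.Icc 1 l).filter (fun t => j ≤ b t + t)).card ↔ j ≤ b i + i := by
  constructor
  · intro hcard
    by_contra! hlt
    have hsub : (Finset.Icc 1 l).filter (fun t => j ≤ b t + t) ⊆ Finset.Icc 1 (i - 1) := by
      intro t ht
      rw [Finset.mem_filter, Finset.mem_Icc] at ht
      have := fun hit => (h.add_le_add_of_le h1 hit ht.1.2).2
      rw [Finset.mem_Icc]
      omega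
    have := Finset.card_le_card hsub
    simp only [Nat.card_Icc] at this
    omega
  · intro hle
    have hsub : Finset.Icc 1 i ⊆ (Finset.Icc 1 l).filter (fun t => j ≤ b t + t) := by
      intro t ht
      rw [Finset.mem_Icc] at ht
      have := (h.add_le_add_of_le ht.1 ht.2 h2).2
      rw [Finset.mem_filter, Finset.mem_Icc]
      omega
    simpa using Finset.card_le_card hsub

lemma IsFrobenius.conj_ofFrobenius (h : IsFrobenius l a b) {i : ℕ} (h1 : 1 ≤ i) (h2 : i ≤ l) :
    conj (ofFrobenius l a b) i = b i + i := by
  refine conj_eq_of_forall_iff fun j hj => ?_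
  by_cases hjl : j ≤ l
  · have := (h.add_le_add_of_le hj hjl le_rfl).1
    have := (h.add_le_add_of_le h1 h2 le_rfl).2
    rw [ofFrobenius_of_le hj hjl]
    omega
  · rw [ofFrobenius_of_lt (by omega)]
    exact h.le_card_filter_iff h1 h2

lemma IsFrobenius.rank_ofFrobenius (h : IsFrobenius l a b) {i : ℕ} (h1 : 1 ≤ i) (h2 : i ≤ l) :
    rank (ofFrobenius l a b) i = (a i : ℤ) - b i := by
  rw [rank, h.conj_ofFrobenius h1 h2, ofFrobenius_of_le h1 h2]
  push_cast
  ring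

lemma IsFrobenius.angPart_ofFrobenius (h : IsFrobenius l a b) {i : ℕ} (h1 : 1 ≤ i) (h2 : i ≤ l) :
    angPart (ofFrobenius l a b) i = a i + b i + 1 := by
  rw [angPart, if_pos ⟨h1, durfee_ofFrobenius.symm ▸ h2⟩, h.conj_ofFrobenius h1 h2,
    ofFrobenius_of_le h1 h2]
  omega

lemma two_mul_sum_Icc_one (l : ℕ) : ∑ t ∈ Finset.Icc 1 l, 2 * t = l * (l + 1) := by
  induction l with
  | zero => rfl
  | succ l ih =>
    rw [Finset.sum_Icc_succ_top (by omega), ih]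
    ring

lemma IsFrobenius.size_ofFrobenius (h : IsFrobenius l a b) :
    size (ofFrobenius l a b) = ∑ t ∈ Finset.Icc 1 l, (a t + b t + 1) := by
  set N := l + b 1 + 1
  have hsize : size (ofFrobenius l a b) = ∑ j ∈ Finset.Ioc 0 N, ofFrobenius l a b j := by
    refine tsum_eq_sum fun j hj => ?_
    rw [Finset.mem_Ioc] at hj
    rcases Nat.eq_zero_or_pos j with rfl | h1
    · rfl
    · exact h.ofFrobenius_eq_zero (by omega) (by omega)
  have hhead : ∑ j ∈ Finset.Ioc 0 l, ofFrobenius l a b j = ∑ t ∈ Finset.Icc 1 l, (a t + t) := by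
    rw [← Finset.Icc_add_one_left_eq_Ioc]
    refine Finset.sum_congr rfl fun j hj => ?_
    rw [Finset.mem_Icc] at hj
    exact ofFrobenius_of_le hj.1 hj.2
  -- below the Durfee square, count cells column by column
  have htail : ∑ j ∈ Finset.Ioc l N, ofFrobenius l a b j = ∑ t ∈ Finset.Icc 1 l, (b t + t - l) := by
    rw [Finset.sum_congr rfl fun j hj => ofFrobenius_of_lt (Finset.mem_Ioc.1 hj).1]
    simp only [Finset.card_filter]
    rw [Finset.sum_comm]
    refine Finset.sum_congr rfl fun t ht => ?_
    rw [Finset.mem_Icc] at ht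
    have := (h.add_le_add_of_le le_rfl ht.1 ht.2).2
    rw [← Finset.card_filter, show (Finset.Ioc l N).filter (fun j => j ≤ b t + t)
      = Finset.Ioc l (b t + t) by ext j; simp only [Finset.mem_filter, Finset.mem_Ioc]; omega,
      Nat.card_Ioc]
  have hcols : ∑ t ∈ Finset.Icc 1 l, ((a t + t) + (b t + t - l)) + ∑ t ∈ Finset.Icc 1 l, (l + 1)
      = ∑ t ∈ Finset.Icc 1 l, (a t + b t + 1) + ∑ t ∈ Finset.Icc 1 l, 2 * t := by
    rw [← Finset.sum_add_distrib, ← Finset.sum_add_distrib]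
    refine Finset.sum_congr rfl fun t ht => ?_
    rw [Finset.mem_Icc] at ht
    have := (h.add_le_add_of_le ht.1 ht.2 le_rfl).2
    omega
  rw [hsize, ← Finset.sum_Ioc_consecutive _ (Nat.zero_le l) (by omega), hhead, htail,
    ← Finset.sum_add_distrib]
  simp only [Finset.sum_const, Nat.card_Icc, Nat.add_sub_cancel, smul_eq_mul,
    two_mul_sum_Icc_one] at hcols
  omega

end Frobenius

section FrobeniusCoordinates

def arm (π : ℕ → ℕ) (i : ℕ) : ℕ := π i - i

noncomputable def leg (π : ℕ → ℕ) (i : ℕ) : ℕ := conj π i - i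

variable {π : ℕ → ℕ}

lemma angPart_eq_zero {i : ℕ} (h : ¬(1 ≤ i ∧ i ≤ durfee π)) : angPart π i = 0 := if_neg h

lemma colorOf_eq_zero {r i : ℕ} (h : ¬(1 ≤ i ∧ i ≤ durfee π)) : colorOf r π i = 0 := if_neg h

namespace IsPartition

lemma angPart_eq (hπ : IsPartition π) {i : ℕ} (h1 : 1 ≤ i) (h2 : i ≤ durfee π) :
    angPart π i = arm π i + leg π i + 1 := by
  have := hπ.durfee_le_apply h1 h2
  have := hπ.durfee_le_conj h1 h2
  rw [angPart, if_pos ⟨h1, h2⟩, arm, leg]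
  omega

lemma rank_eq (hπ : IsPartition π) {i : ℕ} (h1 : 1 ≤ i) (h2 : i ≤ durfee π) :
    rank π i = (arm π i : ℤ) - leg π i := by
  have := hπ.durfee_le_apply h1 h2
  have := hπ.durfee_le_conj h1 h2
  rw [rank, arm, leg]
  omega

lemma isFrobenius_arm_leg (hπ : IsPartition π) : IsFrobenius (durfee π) (arm π) (leg π) := by
  intro i h1 h2
  have := hπ.durfee_le_apply h1 (by omega)
  have := hπ.durfee_le_apply (by omega) h2
  have := hπ.durfee_le_conj h1 (by omega)
  have := hπ.durfee_le_conj (by omega) h2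
  have := hπ.2.1 i (i + 1) h1 (by omega)
  have := hπ.conj_succ_le h1
  rw [arm, arm, leg, leg]
  omega

lemma ofFrobenius_arm_leg (hπ : IsPartition π) : ofFrobenius (durfee π) (arm π) (leg π) = π := by
  funext i
  rcases Nat.eq_zero_or_pos i with rfl | h1
  · exact hπ.1.symm
  by_cases h2 : i ≤ durfee π
  · have := hπ.durfee_le_apply h1 h2
    rw [ofFrobenius_of_le h1 h2, arm]
    omega
  rw [ofFrobenius_of_lt (by omega)]
  have hpi := hπ.apply_le_durfee (by omega : durfee π < i)
  have hcols :
      (Finset.Icc 1 (durfee π)).filter (fun t => i ≤ leg π t + t) = Finset.Icc 1 (π i) := by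
    ext t
    simp only [Finset.mem_filter, Finset.mem_Icc]
    constructor
    · rintro ⟨⟨ht1, htd⟩, hleg⟩
      have := hπ.durfee_le_conj ht1 htd
      exact ⟨ht1, (hπ.le_conj_iff ht1 h1).1 (by rw [leg] at hleg; omega)⟩
    · rintro ⟨ht1, hti⟩
      have := (hπ.le_conj_iff ht1 h1).2 hti
      have := hπ.durfee_le_conj ht1 (by omega)
      exact ⟨⟨ht1, by omega⟩, by rw [leg]; omega⟩
  rw [hcols, Nat.card_Icc]
  omega

lemma isPartition_angPart (hπ : IsPartition π) : IsPartition (angPart π) := by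
  refine ⟨angPart_eq_zero (by omega), fun i j h1 hij => ?_, durfee π + 1,
    fun j hj => angPart_eq_zero (by omega)⟩
  by_cases hj : j ≤ durfee π
  · rw [hπ.angPart_eq h1 (hij.trans hj), hπ.angPart_eq (by omega) hj]
    have := hπ.isFrobenius_arm_leg.add_le_add_of_le h1 hij hj
    omega
  · rw [angPart_eq_zero (by omega)]
    omega

lemma len_angPart (hπ : IsPartition π) : len (angPart π) = durfee π :=
  conj_eq_of_forall_iff fun j hj => by
    by_cases hjd : j ≤ durfee π
    · rw [hπ.angPart_eq hj hjd]
      omega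
    · rw [angPart_eq_zero (by omega)]
      omega

lemma size_angPart (hπ : IsPartition π) : size (angPart π) = size π := by
  conv_rhs => rw [← hπ.ofFrobenius_arm_leg]
  rw [hπ.isPartition_angPart.size_eq_sum, hπ.len_angPart,
    hπ.isFrobenius_arm_leg.size_ofFrobenius]
  refine Finset.sum_congr rfl fun j hj => ?_
  rw [Finset.mem_Icc] at hj
  exact hπ.angPart_eq hj.1 hj.2

end IsPartition

end FrobeniusCoordinates

section ColorEncoding

def rankOfColor (r α c : ℕ) : ℤ := if α % 2 = r % 2 then 2 * c - r + 1 else 2 * c - r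

def colorOfRank (r α : ℕ) (ρ : ℤ) : ℕ :=
  if α % 2 = r % 2 then ((ρ + r - 1) / 2).toNat else ((ρ + r) / 2).toNat

lemma colorOf_eq_colorOfRank {r i : ℕ} {π : ℕ → ℕ} (h : 1 ≤ i ∧ i ≤ durfee π) :
    colorOf r π i = colorOfRank r (angPart π i) (rank π i) :=
  if_pos h

lemma colorOfRank_rankOfColor (r α c : ℕ) : colorOfRank r α (rankOfColor r α c) = c := by
  unfold colorOfRank rankOfColor
  split_ifs <;> omega

lemma rankOfColor_colorOfRank {r α : ℕ} {ρ : ℤ} (hpar : (α + ρ) % 2 = 1) (hρ : 1 - r ≤ ρ) :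
    rankOfColor r α (colorOfRank r α ρ) = ρ := by
  unfold colorOfRank rankOfColor
  split_ifs <;> omega

lemma add_rankOfColor_emod_two (r α c : ℕ) : ((α : ℤ) + rankOfColor r α c) % 2 = 1 := by
  unfold rankOfColor
  split_ifs <;> omega

lemma rankOfColor_bounds_iff {M r α c : ℕ} :
    (-(r : ℤ) + 2 ≤ rankOfColor r α c ∧ rankOfColor r α c ≤ M - r - 2) ↔
      (1 ≤ c ∧ c ≤ M / 2 - 1) ∧ (M % 2 = 0 → c = M / 2 - 1 → α % 2 ≠ r % 2) := by
  unfold rankOfColor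
  split_ifs <;> omega

lemma cCond_iff {M r : ℕ} {α c : ℕ → ℕ} : CCond M r α c ↔
    (∀ i, 1 ≤ i → i ≤ len α → |rankOfColor r (α i) (c i)| < α i) ∧
    (∀ i, 1 ≤ i → i + 1 ≤ len α →
      2 + |rankOfColor r (α i) (c i) - rankOfColor r (α (i + 1)) (c (i + 1))| ≤
        (α i : ℤ) - α (i + 1)) ∧
    (∀ i, 1 ≤ i → i ≤ len α → M % 2 = 0 → c i = M / 2 - 1 → α i % 2 ≠ r % 2) := by
  have hbound : ∀ a c : ℕ, (if a % 2 = r % 2 then (a : ℤ) > |2 * (c : ℤ) - r + 1|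
      else (a : ℤ) > |2 * (c : ℤ) - r|) ↔ |rankOfColor r a c| < a := fun a c => by
    unfold rankOfColor
    split_ifs <;> rfl
  have hgap : ∀ a a' c c' : ℕ, (if a % 2 = a' % 2 then |2 * ((c : ℤ) - c')|
      else if a' % 2 = r % 2 then |2 * ((c : ℤ) - c') - 1| else |2 * ((c : ℤ) - c') + 1|) =
      |rankOfColor r a c - rankOfColor r a' c'| := fun a a' c c' => by
    unfold rankOfColor
    split_ifs <;> first | omega | (congr 1; ring)
  simp only [CCond, hbound, hgap, ge_iff_le]

/-- Recovers `a` from `α = a + b + 1` and `ρ = a - b`; `hookLeg` recovers `b`. -/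
def hookArm (α : ℕ) (ρ : ℤ) : ℕ := ((α + ρ - 1) / 2).toNat

def hookLeg (α : ℕ) (ρ : ℤ) : ℕ := ((α - ρ - 1) / 2).toNat

lemma hookArm_add_add_one (a b : ℕ) : hookArm (a + b + 1) ((a : ℤ) - b) = a := by
  unfold hookArm
  omega

lemma hookLeg_add_add_one (a b : ℕ) : hookLeg (a + b + 1) ((a : ℤ) - b) = b := by
  unfold hookLeg
  omega

lemma hookArm_add_hookLeg_add_one {α : ℕ} {ρ : ℤ} (h : |ρ| < α) (hpar : (α + ρ) % 2 = 1) :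
    hookArm α ρ + hookLeg α ρ + 1 = α := by
  rw [abs_lt] at h
  unfold hookArm hookLeg
  omega

lemma hookArm_sub_hookLeg {α : ℕ} {ρ : ℤ} (h : |ρ| < α) (hpar : (α + ρ) % 2 = 1) :
    (hookArm α ρ : ℤ) - hookLeg α ρ = ρ := by
  rw [abs_lt] at h
  unfold hookArm hookLeg
  omega

/-- Since `(α_i - α_{i+1}) - |ρ_i - ρ_{i+1}| = 2 min(a_i - a_{i+1}, b_i - b_{i+1})`, condition (ii)
says exactly that both Frobenius coordinates decrease strictly. -/
lemma isFrobenius_iff_gap {l : ℕ} {a b α : ℕ → ℕ} {ρ : ℕ → ℤ}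
    (hα : ∀ i, 1 ≤ i → i ≤ l → α i = a i + b i + 1)
    (hρ : ∀ i, 1 ≤ i → i ≤ l → ρ i = a i - b i) :
    IsFrobenius l a b ↔
      ∀ i, 1 ≤ i → i + 1 ≤ l → 2 + |ρ i - ρ (i + 1)| ≤ (α i : ℤ) - α (i + 1) := by
  refine forall_congr' fun i => forall_congr' fun h1 => forall_congr' fun h2 => ?_
  rw [hα i h1 (by omega), hα (i + 1) (by omega) h2, hρ i h1 (by omega), hρ (i + 1) (by omega) h2,
    ← le_sub_iff_add_le', abs_le]
  push_cast
  omega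

end ColorEncoding

section Bijection

noncomputable def ofColored (r : ℕ) (p : (ℕ → ℕ) × (ℕ → ℕ)) : ℕ → ℕ :=
  ofFrobenius (len p.1) (fun i => hookArm (p.1 i) (rankOfColor r (p.1 i) (p.2 i)))
    (fun i => hookLeg (p.1 i) (rankOfColor r (p.1 i) (p.2 i)))

variable {n M r : ℕ}

lemma IsPartition.rankOfColor_colorOf {π : ℕ → ℕ} (hπ : IsPartition π) {i : ℕ} (h1 : 1 ≤ i)
    (h2 : i ≤ durfee π) (hρ : 1 - r ≤ rank π i) :
    rankOfColor r (angPart π i) (colorOf r π i) = rank π i := by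
  rw [colorOf_eq_colorOfRank ⟨h1, h2⟩]
  refine rankOfColor_colorOfRank ?_ hρ
  rw [hπ.angPart_eq h1 h2, hπ.rank_eq h1 h2]
  push_cast
  omega

lemma durfee_ofColored (p : (ℕ → ℕ) × (ℕ → ℕ)) : durfee (ofColored r p) = len p.1 :=
  durfee_ofFrobenius

namespace CCond

variable {α c : ℕ → ℕ}

lemma abs_rankOfColor_lt (hC : CCond M r α c) {i : ℕ} (h1 : 1 ≤ i) (h2 : i ≤ len α) :
    |rankOfColor r (α i) (c i)| < α i :=
  (cCond_iff.1 hC).1 i h1 h2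

lemma isFrobenius (hC : CCond M r α c) :
    IsFrobenius (len α) (fun i => hookArm (α i) (rankOfColor r (α i) (c i)))
      (fun i => hookLeg (α i) (rankOfColor r (α i) (c i))) :=
  (isFrobenius_iff_gap
    (fun i h1 h2 => (hookArm_add_hookLeg_add_one (hC.abs_rankOfColor_lt h1 h2)
      (add_rankOfColor_emod_two r (α i) (c i))).symm)
    (fun i h1 h2 => (hookArm_sub_hookLeg (hC.abs_rankOfColor_lt h1 h2)
      (add_rankOfColor_emod_two r (α i) (c i))).symm)).2
    (cCond_iff.1 hC).2.1

lemma angPart_ofColored (hC : CCond M r α c) {i : ℕ} (h1 : 1 ≤ i) (h2 : i ≤ len α) :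
    angPart (ofColored r (α, c)) i = α i :=
  (hC.isFrobenius.angPart_ofFrobenius h1 h2).trans
    (hookArm_add_hookLeg_add_one (hC.abs_rankOfColor_lt h1 h2) (add_rankOfColor_emod_two ..))

lemma rank_ofColored (hC : CCond M r α c) {i : ℕ} (h1 : 1 ≤ i) (h2 : i ≤ len α) :
    rank (ofColored r (α, c)) i = rankOfColor r (α i) (c i) :=
  (hC.isFrobenius.rank_ofFrobenius h1 h2).trans
    (hookArm_sub_hookLeg (hC.abs_rankOfColor_lt h1 h2) (add_rankOfColor_emod_two ..))

end CCond

lemma mapsTo_angPart_colorOf :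
    Set.MapsTo (fun π => (angPart π, colorOf r π)) (Aset n M r) (Cset n M r) := by
  rintro π ⟨hπ, rfl, hrank⟩
  have hlen := hπ.len_angPart
  have hρ : ∀ i, 1 ≤ i → i ≤ durfee π →
      rankOfColor r (angPart π i) (colorOf r π i) = rank π i :=
    fun i h1 h2 => hπ.rankOfColor_colorOf h1 h2 (by linarith [(hrank i h1 h2).1])
  have hcolor : ∀ i, 1 ≤ i → i ≤ len (angPart π) →
      (1 ≤ colorOf r π i ∧ colorOf r π i ≤ M / 2 - 1) ∧
        (M % 2 = 0 → colorOf r π i = M / 2 - 1 → angPart π i % 2 ≠ r % 2) :=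
    fun i h1 h2 => rankOfColor_bounds_iff.1 (hρ i h1 (hlen ▸ h2) ▸ hrank i h1 (hlen ▸ h2))
  have hgap := (isFrobenius_iff_gap (fun i h1 h2 => hπ.angPart_eq h1 h2)
    (fun i h1 h2 => (hρ i h1 h2).trans (hπ.rank_eq h1 h2))).1 hπ.isFrobenius_arm_leg
  rw [← hlen] at hgap
  refine ⟨⟨hπ.isPartition_angPart, fun i h1 h2 => (hcolor i h1 h2).1,
    fun i h1 (h2 : i + 1 ≤ len (angPart π)) (heq : angPart π i = angPart π (i + 1)) => ?_,
    fun i (hi : i = 0 ∨ len (angPart π) < i) => colorOf_eq_zero (by omega)⟩, hπ.size_angPart,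
    cCond_iff.2 ⟨fun i h1 h2 => ?_, hgap, fun i h1 h2 => (hcolor i h1 h2).2⟩⟩
  · rw [hlen] at h2
    have := hπ.isFrobenius_arm_leg i h1 h2
    rw [hπ.angPart_eq h1 (by omega), hπ.angPart_eq (by omega) h2] at heq
    omega
  · dsimp only at h2 ⊢
    rw [hlen] at h2
    rw [hρ i h1 h2, hπ.rank_eq h1 h2, hπ.angPart_eq h1 h2, abs_lt]
    push_cast
    omega

lemma mapsTo_ofColored : Set.MapsTo (ofColored r) (Cset n M r) (Aset n M r) := by
  rintro ⟨α, c⟩ ⟨⟨hα, hcol, -, -⟩, rfl, hC⟩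
  refine ⟨hC.isFrobenius.isPartition_ofFrobenius, ?_, fun i h1 h2 => ?_⟩
  · rw [ofColored, hC.isFrobenius.size_ofFrobenius, hα.size_eq_sum]
    refine Finset.sum_congr rfl fun i hi => ?_
    rw [Finset.mem_Icc] at hi
    exact hookArm_add_hookLeg_add_one (hC.abs_rankOfColor_lt hi.1 hi.2)
      (add_rankOfColor_emod_two ..)
  · rw [durfee_ofColored] at h2
    rw [hC.rank_ofColored h1 h2]
    exact rankOfColor_bounds_iff.2 ⟨hcol i h1 h2, (cCond_iff.1 hC).2.2 i h1 h2⟩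

lemma leftInvOn_ofColored :
    Set.LeftInvOn (ofColored r) (fun π => (angPart π, colorOf r π)) (Aset n M r) := by
  rintro π ⟨hπ, -, hrank⟩
  have hρ : ∀ i, 1 ≤ i → i ≤ durfee π →
      rankOfColor r (angPart π i) (colorOf r π i) = (arm π i : ℤ) - leg π i := fun i h1 h2 =>
    (hπ.rankOfColor_colorOf h1 h2 (by linarith [(hrank i h1 h2).1])).trans (hπ.rank_eq h1 h2)
  conv_rhs => rw [← hπ.ofFrobenius_arm_leg]
  simp only [ofColored, hπ.len_angPart]
  apply ofFrobenius_congr <;> intro i h1 h2 <;> rw [hρ i h1 h2, hπ.angPart_eq h1 h2]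
  · exact hookArm_add_add_one _ _
  · exact hookLeg_add_add_one _ _

lemma rightInvOn_ofColored :
    Set.LeftInvOn (fun π => (angPart π, colorOf r π)) (ofColored r) (Cset n M r) := by
  rintro ⟨α, c⟩ ⟨⟨hα, -, -, hzero⟩, -, hC⟩
  dsimp only at hα hzero hC
  have hd : durfee (ofColored r (α, c)) = len α := durfee_ofColored _
  have hang : angPart (ofColored r (α, c)) = α := funext fun i => by
    by_cases hi : 1 ≤ i ∧ i ≤ len α
    · exact hC.angPart_ofColored hi.1 hi.2
    · rw [angPart_eq_zero (hd ▸ hi), hα.apply_eq_zero hi]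
  refine Prod.ext hang (funext fun i => ?_)
  by_cases hi : 1 ≤ i ∧ i ≤ len α
  · change colorOf r _ i = c i
    rw [colorOf_eq_colorOfRank (hd ▸ hi), hang, hC.rank_ofColored hi.1 hi.2]
    exact colorOfRank_rankOfColor _ _ _
  · exact (colorOf_eq_zero (hd ▸ hi)).trans (hzero i (by omega)).symm

end Bijection

theorem stmt9_general (n M r : ℕ) :
    Set.BijOn (fun π => (angPart π, colorOf r π)) (Aset n M r) (Cset n M r) ∧
    (Aset n M r).ncard = (Cset n M r).ncard := by
  have hbij : Set.BijOn (fun π => (angPart π, colorOf r π)) (Aset n M r) (Cset n M r) :=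
    Set.InvOn.bijOn ⟨leftInvOn_ofColored, rightInvOn_ofColored⟩ mapsTo_angPart_colorOf
      mapsTo_ofColored
  exact ⟨hbij, hbij.ncard_eq⟩

theorem stmt9 (n M r : ℕ) (hr : 0 < r) (hM : 2 * r ≤ M) :
    Set.BijOn (fun π => (angPart π, colorOf r π)) (Aset n M r) (Cset n M r) ∧
    (Aset n M r).ncard = (Cset n M r).ncard :=
  stmt9_general n M r
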